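/- arXiv:2401.02420 — 3 statements merged into one kernel-verified Lean document; each statement's English description precedes it below -/
import Mathlib

section
/- For integers a 1, ..., a n, the integral over t from 0 to 1 of ∏_{k} (1 + exp(2πi·(a k)·t)) equals the number of subsets of {1,...,n} (including the empty set) whose elements sum to 0, viewed as a complex number. -/
open Complex Real

lemma integral_exp_int_aux (m : ℤ) :
    (∫ t in (0:ℝ)..1, Complex.exp (2 * Real.pi * Complex.I * (m : ℂ) * (t : ℂ))) =
      if m = 0 then 1 else 0 := by
  by_cases hm : m = 0
  · simp [hm]
  · rw [if_neg hm]
    have hc : (2 * (Real.pi : ℂ) * Complex.I * (m : ℂ)) ≠ 0 := by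
      simp [Real.pi_ne_zero, Complex.I_ne_zero, hm]
    have h := integral_exp_mul_complex (a := (0:ℝ)) (b := 1) hc
    rw [h]
    have : Complex.exp (2 * (Real.pi : ℂ) * Complex.I * (m : ℂ) * (1:ℝ)) = 1 := by
      rw [show (2 * (Real.pi : ℂ) * Complex.I * (m : ℂ) * ((1:ℝ):ℂ)) = (m : ℂ) * (2 * Real.pi * Complex.I) by push_cast; ring]
      exact Complex.exp_int_mul_two_pi_mul_I m
    rw [this]
    simp

theorem integral_product_eq_zero_sum_count (n : ℕ) (a : Fin n → ℤ) :
    (∫ t in (0:ℝ)..1, ∏ k : Fin n,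
        (1 + Complex.exp (2 * Real.pi * Complex.I * (a k : ℂ) * (t : ℂ)))) =
      ((Finset.univ.filter (fun S : Finset (Fin n) => ∑ k ∈ S, a k = 0)).card : ℂ) := by
  have key : ∀ t : ℝ, (∏ k : Fin n,
        (1 + Complex.exp (2 * Real.pi * Complex.I * (a k : ℂ) * (t : ℂ)))) =
      ∑ S : Finset (Fin n),
        Complex.exp (2 * Real.pi * Complex.I * ((∑ k ∈ S, a k : ℤ) : ℂ) * (t : ℂ)) := by
    intro t
    simp_rw [add_comm (1:ℂ)]
    rw [Finset.prod_add]
    rw [← Finset.powerset_univ]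
    refine Finset.sum_congr rfl fun S _ => ?_
    rw [Finset.prod_const_one, mul_one, ← Complex.exp_sum]
    congr 1
    push_cast
    rw [Finset.mul_sum, Finset.sum_mul]
  rw [intervalIntegral.integral_congr (g := fun t => ∑ S : Finset (Fin n),
        Complex.exp (2 * Real.pi * Complex.I * ((∑ k ∈ S, a k : ℤ) : ℂ) * (t : ℂ)))
      (fun t _ => key t)]
  rw [intervalIntegral.integral_finset_sum (fun S _ => (Continuous.intervalIntegrable (by fun_prop) 0 1))]
  simp_rw [integral_exp_int_aux]
  rw [Finset.sum_boole]
end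

section
/- For integers a 1, ..., a n, the integral over t from 0 to 1 of ∏_{k} (1 + exp(2πi·(a k)·t)) has real part strictly greater than 1 if and only if there exists a nonempty subset of {1,...,n} whose elements sum to 0. -/
open Complex Real

theorem integral_re_gt_one_iff_zero_sum_subset (n : ℕ) (a : Fin n → ℤ) :
    1 < (∫ t in (0:ℝ)..1, ∏ k : Fin n,
          (1 + Complex.exp (2 * Real.pi * Complex.I * (a k : ℂ) * (t : ℂ)))).re ↔
      ∃ S : Finset (Fin n), S.Nonempty ∧ ∑ k ∈ S, a k = 0 := by
  have hfun : ∀ t : ℝ, ∏ k : Fin n,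
      (1 + Complex.exp (2 * Real.pi * Complex.I * (a k : ℂ) * (t : ℂ))) =
      ∑ S ∈ (Finset.univ : Finset (Fin n)).powerset,
        Complex.exp (2 * Real.pi * Complex.I * ((∑ k ∈ S, a k : ℤ) : ℂ) * (t : ℂ)) := by
    intro t
    rw [Finset.prod_congr rfl (fun k _ => add_comm 1
      (Complex.exp (2 * Real.pi * Complex.I * (a k : ℂ) * (t : ℂ)))), Finset.prod_add]
    refine Finset.sum_congr rfl fun S hS => ?_
    rw [Finset.prod_const_one, mul_one, ← Complex.exp_sum]
    congr 1
    push_cast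
    rw [Finset.mul_sum, Finset.sum_mul]
  have key : (∫ t in (0:ℝ)..1, ∏ k : Fin n,
      (1 + Complex.exp (2 * Real.pi * Complex.I * (a k : ℂ) * (t : ℂ)))) =
      ∑ S ∈ (Finset.univ : Finset (Fin n)).powerset,
        (if (∑ k ∈ S, a k) = 0 then (1:ℂ) else 0) := by
    simp only [hfun]
    rw [intervalIntegral.integral_finset_sum]
    · exact Finset.sum_congr rfl fun S _ => integral_exp_int_aux _
    · intro S _
      exact (Continuous.cexp (by fun_prop)).intervalIntegrable _ _
  rw [key, Finset.sum_boole, Complex.natCast_re,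
    show (1:ℝ) = ((1:ℕ):ℝ) by norm_cast, Nat.cast_lt]
  constructor
  · intro h
    obtain ⟨S, hS, T, hT, hST⟩ := Finset.one_lt_card.mp h
    rcases eq_or_ne S ∅ with rfl | hSne
    · exact ⟨T, Finset.nonempty_iff_ne_empty.mpr (fun hT0 => hST (by simp [hT0])),
        (Finset.mem_filter.mp hT).2⟩
    · exact ⟨S, Finset.nonempty_iff_ne_empty.mpr hSne, (Finset.mem_filter.mp hS).2⟩
  · rintro ⟨S, hSne, hsum⟩
    exact Finset.one_lt_card.mpr ⟨S, by simp [Finset.mem_filter, hsum], ∅, by simp,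
      hSne.ne_empty⟩
end

section
/- Correctness of the pseudo-polynomial tape algorithm: define tapes T_i : ℕ → ℕ by T_0 = 0 everywhere, and T_{i+1}(j) = T_i(j) + (if j ≥ a i then T_i(j − a i) else 0) + (if j = a i then 1 else 0). Then for every i ≤ n and every j, T_i(j) equals the number of nonempty subsets of the first i elements whose sum is j. -/
theorem tape_algorithm_correct (n : ℕ) (a : Fin n → ℕ) (hpos : ∀ k, 0 < a k)
    (tape : ℕ → ℕ → ℕ)
    (h0 : ∀ j, tape 0 j = 0)
    (hstep : ∀ i : Fin n, ∀ j : ℕ,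
      tape (i + 1) j = tape i j + (if (a i) ≤ j then tape i (j - a i) else 0) +
        (if j = a i then 1 else 0)) :
    ∀ i : ℕ, i ≤ n → ∀ j : ℕ,
      tape i j = (Finset.univ.filter (fun S : Finset (Fin n) =>
        S.Nonempty ∧ S ⊆ Finset.univ.filter (fun k : Fin n => (k : ℕ) < i) ∧
          ∑ k ∈ S, a k = j)).card := by
  intro i hi
  induction i with
  | zero =>
    intro j
    rw [h0]
    symm
    rw [Finset.card_eq_zero, Finset.filter_eq_empty_iff]
    rintro S - ⟨hne, hsub, -⟩
    obtain ⟨x, hx⟩ := hne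
    have := hsub hx
    simp at this
  | succ i ih =>
    have hin : i < n := hi
    have ih' := ih (Nat.le_of_succ_le hi)
    intro j
    have hs := hstep ⟨i, hin⟩ j
    simp only [Fin.val_mk] at hs
    set p : Fin n := ⟨i, hin⟩ with hp
    rw [hs, ih' j, ih' (j - a p)]
    set A := Finset.univ.filter (fun S : Finset (Fin n) =>
        S.Nonempty ∧ S ⊆ Finset.univ.filter (fun k : Fin n => (k : ℕ) < i + 1) ∧
          ∑ k ∈ S, a k = j) with hA
    have hpnotfirst : ∀ T : Finset (Fin n),
        T ⊆ Finset.univ.filter (fun k : Fin n => (k : ℕ) < i) → p ∉ T := by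
      intro T hT hpT
      have := hT hpT
      simp [hp] at this
    -- split A by p ∈ S
    have hsplit : (A.filter (fun S => p ∈ S)).card
        + (A.filter (fun S => p ∉ S)).card = A.card :=
      Finset.card_filter_add_card_filter_not (fun S => p ∈ S)
    have hnot : A.filter (fun S => p ∉ S) = Finset.univ.filter (fun S : Finset (Fin n) =>
        S.Nonempty ∧ S ⊆ Finset.univ.filter (fun k : Fin n => (k : ℕ) < i) ∧
          ∑ k ∈ S, a k = j) := by
      ext S
      simp only [hA, Finset.mem_filter, Finset.mem_univ, true_and, and_assoc]
      constructor
      · rintro ⟨hne, hsub, hsum, hpS⟩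
        refine ⟨hne, ?_, hsum⟩
        intro k hk
        have hk' := hsub hk
        simp only [Finset.mem_filter, Finset.mem_univ, true_and] at hk' ⊢
        rcases Nat.lt_succ_iff_lt_or_eq.mp hk' with h | h
        · exact h
        · exact absurd (Fin.ext h : k = p) (fun e => hpS (e ▸ hk))
      · rintro ⟨hne, hsub, hsum⟩
        refine ⟨hne, ?_, hsum, hpnotfirst S hsub⟩
        intro k hk
        have hk' := hsub hk
        simp only [Finset.mem_filter, Finset.mem_univ, true_and] at hk' ⊢
        omega
    -- subsets containing p
    set C := Finset.univ.filter (fun T : Finset (Fin n) =>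
        T ⊆ Finset.univ.filter (fun k : Fin n => (k : ℕ) < i) ∧
          (∑ k ∈ T, a k) + a p = j) with hC
    have hmem : (A.filter (fun S => p ∈ S)).card = C.card := by
      refine Finset.card_bij' (fun S _ => S.erase p) (fun T _ => insert p T) ?_ ?_ ?_ ?_
      · intro S hS
        simp only [hA, Finset.mem_filter, Finset.mem_univ, true_and] at hS
        obtain ⟨⟨hne, hsub, hsum⟩, hpS⟩ := hS
        simp only [hC, Finset.mem_filter, Finset.mem_univ, true_and]
        constructor
        · intro k hk
          rw [Finset.mem_erase] at hk
          have hk' := hsub hk.2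
          simp only [Finset.mem_filter, Finset.mem_univ, true_and] at hk' ⊢
          rcases Nat.lt_succ_iff_lt_or_eq.mp hk' with h | h
          · exact h
          · exact absurd (Fin.ext h : k = p) hk.1
        · rw [Finset.sum_erase_add _ _ hpS]
          exact hsum
      · intro T hT
        simp only [hC, Finset.mem_filter, Finset.mem_univ, true_and] at hT
        obtain ⟨hsub, hsum⟩ := hT
        have hpT : p ∉ T := hpnotfirst T hsub
        simp only [hA, Finset.mem_filter, Finset.mem_univ, true_and]
        refine ⟨⟨⟨p, Finset.mem_insert_self _ _⟩, ?_, ?_⟩, Finset.mem_insert_self _ _⟩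
        · intro k hk
          simp only [Finset.mem_filter, Finset.mem_univ, true_and]
          rcases Finset.mem_insert.mp hk with h | h
          · simp [h, hp]
          · have := hsub h
            simp only [Finset.mem_filter, Finset.mem_univ, true_and] at this
            omega
        · rw [Finset.sum_insert hpT]
          omega
      · intro S hS
        simp only [hA, Finset.mem_filter] at hS
        exact Finset.insert_erase hS.2
      · intro T hT
        simp only [hC, Finset.mem_filter, Finset.mem_univ, true_and] at hT
        exact Finset.erase_insert (hpnotfirst T hT.1)
    -- split C by nonemptiness
    have hCsplit : (C.filter (fun T => T.Nonempty)).card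
        + (C.filter (fun T => ¬ T.Nonempty)).card = C.card :=
      Finset.card_filter_add_card_filter_not (fun T : Finset (Fin n) => T.Nonempty)
    have hCne : (C.filter (fun T => T.Nonempty)).card
        = (if a p ≤ j then (Finset.univ.filter (fun S : Finset (Fin n) =>
            S.Nonempty ∧ S ⊆ Finset.univ.filter (fun k : Fin n => (k : ℕ) < i) ∧
              ∑ k ∈ S, a k = j - a p)).card else 0) := by
      by_cases hle : a p ≤ j
      · rw [if_pos hle]
        congr 1
        ext T
        simp only [hC, Finset.mem_filter, Finset.mem_univ, true_and]
        constructor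
        · rintro ⟨⟨hsub, hsum⟩, hne⟩
          exact ⟨hne, hsub, by omega⟩
        · rintro ⟨hne, hsub, hsum⟩
          exact ⟨⟨hsub, by omega⟩, hne⟩
      · rw [if_neg hle]
        rw [Finset.card_eq_zero, Finset.filter_eq_empty_iff]
        rintro T hT -
        simp only [hC, Finset.mem_filter, Finset.mem_univ, true_and] at hT
        omega
    have hCe : (C.filter (fun T => ¬ T.Nonempty)).card = (if j = a p then 1 else 0) := by
      have : C.filter (fun T => ¬ T.Nonempty)
          = if j = a p then {(∅ : Finset (Fin n))} else ∅ := by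
        ext T
        simp only [hC, Finset.mem_filter, Finset.mem_univ, true_and,
          Finset.not_nonempty_iff_eq_empty]
        constructor
        · rintro ⟨⟨hsub, hsum⟩, rfl⟩
          simp only [Finset.sum_empty, zero_add] at hsum
          simp [hsum.symm]
        · intro h
          by_cases hj : j = a p
          · rw [if_pos hj] at h
            simp only [Finset.mem_singleton] at h
            subst h
            simp [hj]
          · rw [if_neg hj] at h
            simp at h
      rw [this]
      split <;> simp
    rw [hnot] at hsplit
    omega
end
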